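/- arXiv:2509.26551 — 2 statements merged into one kernel-verified Lean document; each statement's English description precedes it below -/
import Mathlib

section
/- For any d×d real symmetric matrices A and B with eigenvalues listed in non-increasing order λ₁(A) ≥ ... ≥ λ_d(A) and λ₁(B) ≥ ... ≥ λ_d(B), the trace of the product satisfies ∑_{j=1}^d λ_j(A)·λ_{d-j+1}(B) ≤ tr(AB) ≤ ∑_{j=1}^d λ_j(A)·λ_j(B). -/
open Matrix Finset

private lemma ds_upper {d : ℕ} (a b : Fin d → ℝ) (hab : Monovary a b)
    (S : Matrix (Fin d) (Fin d) ℝ) (hS : S ∈ doublyStochastic ℝ (Fin d)) :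
    ∑ i, ∑ j, a i * b j * S i j ≤ ∑ i, a i * b i := by
  have hlin : IsLinearMap ℝ (fun M : Matrix (Fin d) (Fin d) ℝ => ∑ i, ∑ j, a i * b j * M i j) := by
    constructor
    · intro M N; simp [Matrix.add_apply, mul_add, Finset.sum_add_distrib]
    · intro c M; simp [Matrix.smul_apply, Finset.mul_sum, smul_eq_mul]
      exact Finset.sum_congr rfl fun i _ => Finset.sum_congr rfl fun j _ => by ring
  have hconv : Convex ℝ {M : Matrix (Fin d) (Fin d) ℝ |
      ∑ i, ∑ j, a i * b j * M i j ≤ ∑ i, a i * b i} := convex_halfSpace_le hlin _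
  have hS' : S ∈ convexHull ℝ {M | ∃ σ : Equiv.Perm (Fin d), σ.permMatrix ℝ = M} := by
    rw [← doublyStochastic_eq_convexHull_permMatrix]; exact hS
  refine convexHull_min ?_ hconv hS'
  rintro M ⟨σ, rfl⟩
  have h : ∀ i, ∑ j, a i * b j * (σ.permMatrix ℝ) i j = a i * b (σ i) := by
    intro i
    simp [Equiv.Perm.permMatrix, PEquiv.toMatrix_apply, mul_ite, Option.mem_def,
      Equiv.toPEquiv_apply]
  simp only [Set.mem_setOf_eq, h]
  exact hab.sum_mul_comp_perm_le_sum_mul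

private lemma ds_lower {d : ℕ} (a b : Fin d → ℝ) (hab : Antivary a b)
    (S : Matrix (Fin d) (Fin d) ℝ) (hS : S ∈ doublyStochastic ℝ (Fin d)) :
    ∑ i, a i * b i ≤ ∑ i, ∑ j, a i * b j * S i j := by
  have hlin : IsLinearMap ℝ (fun M : Matrix (Fin d) (Fin d) ℝ => ∑ i, ∑ j, a i * b j * M i j) := by
    constructor
    · intro M N; simp [Matrix.add_apply, mul_add, Finset.sum_add_distrib]
    · intro c M; simp [Matrix.smul_apply, Finset.mul_sum, smul_eq_mul]
      exact Finset.sum_congr rfl fun i _ => Finset.sum_congr rfl fun j _ => by ring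
  have hconv : Convex ℝ {M : Matrix (Fin d) (Fin d) ℝ |
      ∑ i, a i * b i ≤ ∑ i, ∑ j, a i * b j * M i j} := convex_halfSpace_ge hlin _
  have hS' : S ∈ convexHull ℝ {M | ∃ σ : Equiv.Perm (Fin d), σ.permMatrix ℝ = M} := by
    rw [← doublyStochastic_eq_convexHull_permMatrix]; exact hS
  refine convexHull_min ?_ hconv hS'
  rintro M ⟨σ, rfl⟩
  have h : ∀ i, ∑ j, a i * b j * (σ.permMatrix ℝ) i j = a i * b (σ i) := by
    intro i
    simp [Equiv.Perm.permMatrix, PEquiv.toMatrix_apply, mul_ite, Option.mem_def,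
      Equiv.toPEquiv_apply]
  simp only [Set.mem_setOf_eq, h]
  exact hab.sum_mul_le_sum_mul_comp_perm

/-- Ruhe's trace inequality for real symmetric matrices: with eigenvalues listed in
non-increasing order, `∑ λ_j(A) λ_{d-j+1}(B) ≤ tr(AB) ≤ ∑ λ_j(A) λ_j(B)`. -/
theorem stmt_0 (d : ℕ) (A B : Matrix (Fin d) (Fin d) ℝ)
    (hA : A.IsHermitian) (hB : B.IsHermitian)
    (μA μB : Fin d → ℝ) (hμA : Antitone μA) (hμB : Antitone μB)
    (eA : Fin d ≃ Fin d) (heA : μA = hA.eigenvalues ∘ eA)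
    (eB : Fin d ≃ Fin d) (heB : μB = hB.eigenvalues ∘ eB) :
    ∑ j : Fin d, μA j * μB j.rev ≤ (A * B).trace ∧
      (A * B).trace ≤ ∑ j : Fin d, μA j * μB j := by
  -- Spectral decomposition and the orthogonal matrix W
  set U : Matrix (Fin d) (Fin d) ℝ := (hA.eigenvectorUnitary : Matrix (Fin d) (Fin d) ℝ) with hU
  set V : Matrix (Fin d) (Fin d) ℝ := (hB.eigenvectorUnitary : Matrix (Fin d) (Fin d) ℝ) with hV
  set DA := diagonal hA.eigenvalues with hDA
  set DB := diagonal hB.eigenvalues with hDB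
  have hUmem : U ∈ Matrix.unitaryGroup (Fin d) ℝ := hA.eigenvectorUnitary.2
  have hVmem : V ∈ Matrix.unitaryGroup (Fin d) ℝ := hB.eigenvectorUnitary.2
  set W := star U * V with hW
  have hWmem : W ∈ Matrix.unitaryGroup (Fin d) ℝ := mul_mem (Unitary.star_mem hUmem) hVmem
  have hUU : star U * U = 1 := hUmem.1
  have hUU' : U * star U = 1 := hUmem.2
  have hAe : A = U * DA * star U := by simpa using hA.spectral_theorem
  have hBe : B = V * DB * star V := by simpa using hB.spectral_theorem
  have htr : (A * B).trace = ∑ i, ∑ j, hA.eigenvalues i * hB.eigenvalues j * (W i j)^2 := by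
    have h1 : (A * B).trace = (DA * W * DB * star W).trace := by
      rw [hAe, hBe, hW, StarMul.star_mul, star_star]
      rw [show U * DA * star U * (V * DB * star V)
          = U * (DA * (star U * V) * DB * (star V * U) * star U) by
        simp only [Matrix.mul_assoc, hUU', Matrix.mul_one]]
      rw [Matrix.trace_mul_comm]
      rw [Matrix.mul_assoc _ (star U) U, hUU, Matrix.mul_one]
    rw [h1, Matrix.trace]
    refine Finset.sum_congr rfl fun i _ => ?_
    simp only [hDA, hDB, Matrix.diag_apply, Matrix.mul_apply, Matrix.diagonal_apply, ite_mul,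
      mul_ite, zero_mul, mul_zero, Finset.sum_ite_eq, Finset.sum_ite_eq',
      if_pos (Finset.mem_univ _), Matrix.star_apply, conjTranspose_apply, star_trivial,
      Finset.mul_sum, Finset.sum_mul]
    refine Finset.sum_congr rfl fun j _ => ?_
    ring
  -- the doubly stochastic matrix S i j = W (eA i) (eB j) ^ 2
  set S : Matrix (Fin d) (Fin d) ℝ := fun i j => (W (eA i) (eB j))^2 with hS
  have hWrow : ∀ i, ∑ j, (W i j)^2 = 1 := by
    intro i
    have := congrFun (congrFun hWmem.2 i) i
    simp only [Matrix.mul_apply, Matrix.one_apply_eq, Matrix.star_apply, conjTranspose_apply,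
      star_trivial] at this
    simpa [pow_two] using this
  have hWcol : ∀ j, ∑ i, (W i j)^2 = 1 := by
    intro j
    have := congrFun (congrFun hWmem.1 j) j
    simp only [Matrix.mul_apply, Matrix.one_apply_eq, Matrix.star_apply, conjTranspose_apply,
      star_trivial] at this
    simpa [pow_two] using this
  have hSds : S ∈ doublyStochastic ℝ (Fin d) := by
    rw [mem_doublyStochastic_iff_sum]
    refine ⟨fun i j => sq_nonneg _, fun i => ?_, fun j => ?_⟩
    · exact (Equiv.sum_comp eB (fun j => (W (eA i) j)^2)).trans (hWrow (eA i))
    · exact (Equiv.sum_comp eA (fun i => (W i (eB j))^2)).trans (hWcol (eB j))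
  have htr2 : (A * B).trace = ∑ i, ∑ j, μA i * μB j * S i j := by
    rw [htr, heA, heB]
    rw [← Equiv.sum_comp eA (fun i => ∑ j, hA.eigenvalues i * hB.eigenvalues j * (W i j)^2)]
    refine Finset.sum_congr rfl fun i _ => ?_
    exact (Equiv.sum_comp eB (fun j =>
      hA.eigenvalues (eA i) * hB.eigenvalues j * (W (eA i) j)^2)).symm
  -- monovariance
  have hmono : Monovary μA μB := by
    intro i j hij
    rcases le_total i j with h | h
    · exact absurd (hμB h) (not_le.2 hij)
    · exact hμA h
  have hanti : Antivary μA (μB ∘ Fin.rev) := by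
    intro i j hij
    rcases le_total j i with h | h
    · exact absurd (hμB (Fin.rev_le_rev.mpr h)) (not_le.2 hij)
    · exact hμA h
  constructor
  · -- lower bound
    set S' : Matrix (Fin d) (Fin d) ℝ := fun i j => S i j.rev with hS'
    have hSsum := mem_doublyStochastic_iff_sum.mp hSds
    have hS'ds : S' ∈ doublyStochastic ℝ (Fin d) := by
      rw [mem_doublyStochastic_iff_sum]
      refine ⟨fun i j => hSsum.1 _ _, fun i => ?_, fun j => ?_⟩
      · exact (Equiv.sum_comp Fin.revPerm (fun j => S i j)).trans (hSsum.2.1 i)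
      · exact hSsum.2.2 j.rev
    have := ds_lower μA (μB ∘ Fin.rev) hanti S' hS'ds
    calc ∑ j : Fin d, μA j * μB j.rev = ∑ i, μA i * (μB ∘ Fin.rev) i := rfl
      _ ≤ ∑ i, ∑ j, μA i * (μB ∘ Fin.rev) j * S' i j := this
      _ = ∑ i, ∑ j, μA i * μB j * S i j := by
          refine Finset.sum_congr rfl fun i _ => ?_
          exact Equiv.sum_comp Fin.revPerm (fun j => μA i * μB j * S i j)
      _ = (A * B).trace := htr2.symm
  · rw [htr2]
    exact ds_upper μA μB hmono S hSds
end

section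
/- Let A and B be real symmetric d×d matrices. If tr(AB) = ∑_{j=1}^d λ_j(A)·λ_j(B), where eigenvalues are in non-increasing order, and all eigenvalues of A are distinct and all eigenvalues of B are distinct, then A and B commute (equivalently, are simultaneously diagonalizable). -/
open Matrix Finset

/-- Rearrangement/Ky Fan bound: if `t` is between 0 and 1 with total `k ≤ d`, and `μ`
is nonincreasing on `[0,d)`, then `∑_{q<d} μ q * t q ≤ ∑_{q<k} μ q`. -/
lemma aux_kyfan (d k : ℕ) (hk : k ≤ d) (μ t : ℕ → ℝ)
    (hmono : ∀ p q, p ≤ q → q < d → μ q ≤ μ p)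
    (ht0 : ∀ q, 0 ≤ t q) (ht1 : ∀ q, t q ≤ 1)
    (hsum : ∑ q ∈ range d, t q = k) :
    ∑ q ∈ range d, μ q * t q ≤ ∑ q ∈ range k, μ q := by
  rcases Nat.eq_zero_or_pos d with rfl | hd
  · interval_cases k; simp
  set c : ℝ := μ (min k (d - 1)) with hc
  have key : ∑ q ∈ range d, μ q * t q - ∑ q ∈ range k, μ q
      = ∑ q ∈ range k, (μ q - c) * (t q - 1) + ∑ q ∈ Ico k d, (μ q - c) * t q := by
    have h1 : ∑ q ∈ range k, (μ q - c) * (t q - 1)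
        = ∑ q ∈ range k, (μ q - c) * t q - ∑ q ∈ range k, (μ q - c) := by
      rw [← Finset.sum_sub_distrib]; congr 1; ext q; ring
    have h2 : ∑ q ∈ range k, (μ q - c) * t q + ∑ q ∈ Ico k d, (μ q - c) * t q
        = ∑ q ∈ range d, (μ q - c) * t q := Finset.sum_range_add_sum_Ico _ hk
    have h3 : ∑ q ∈ range d, (μ q - c) * t q
        = ∑ q ∈ range d, μ q * t q - c * k := by
      rw [← hsum, Finset.mul_sum, ← Finset.sum_sub_distrib]; congr 1; ext q; ring
    have h4 : ∑ q ∈ range k, (μ q - c) = ∑ q ∈ range k, μ q - c * k := by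
      rw [Finset.sum_sub_distrib]; simp [mul_comm]
    rw [h1]; linarith
  have hle1 : ∀ q ∈ range k, (μ q - c) * (t q - 1) ≤ 0 := by
    intro q hq
    rw [Finset.mem_range] at hq
    have hqd : q < d := lt_of_lt_of_le hq hk
    have : c ≤ μ q := by
      apply hmono q (min k (d-1))
      · exact le_min (le_of_lt hq) (Nat.le_sub_one_of_lt hqd)
      · exact lt_of_le_of_lt (min_le_right _ _) (Nat.sub_lt hd one_pos)
    nlinarith [ht1 q]
  have hle2 : ∀ q ∈ Ico k d, (μ q - c) * t q ≤ 0 := by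
    intro q hq
    rw [Finset.mem_Ico] at hq
    have : μ q ≤ c := by
      apply hmono (min k (d-1)) q _ hq.2
      exact le_trans (min_le_left _ _) hq.1
    nlinarith [ht0 q]
  have := Finset.sum_nonpos hle1
  have := Finset.sum_nonpos hle2
  linarith

/-- Equality forcing via Abel summation. -/
lemma aux_force (d : ℕ) (a g : ℕ → ℝ)
    (ha : ∀ p q, p < q → q < d → a q < a p)
    (hpart : ∀ k ≤ d, 0 ≤ ∑ j ∈ range k, g j)
    (htot : ∑ j ∈ range d, g j = 0)
    (hzero : ∑ j ∈ range d, a j * g j = 0) :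
    ∀ j < d, g j = 0 := by
  have habel := Finset.sum_range_by_parts a g d
  simp only [smul_eq_mul, htot, mul_zero, hzero, zero_sub, eq_comm (a := (0:ℝ)),
    neg_eq_zero] at habel
  have hD : ∀ k ≤ d, ∑ j ∈ range k, g j = 0 := by
    intro k hkd
    rcases Nat.eq_zero_or_pos k with rfl | hk0
    · simp
    rcases eq_or_lt_of_le hkd with rfl | hklt
    · exact htot
    -- k ∈ [1, d-1], use abel
    have hterms' : ∀ i ∈ range (d-1), (a (i+1) - a i) * ∑ j ∈ range (i+1), g j ≤ 0 := by
      intro i hi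
      rw [Finset.mem_range] at hi
      have h1 : a (i+1) < a i := ha i (i+1) (Nat.lt_succ_self i) (by omega)
      have h2 := hpart (i+1) (by omega)
      nlinarith
    have hall : ∀ i ∈ range (d-1), (a (i+1) - a i) * ∑ j ∈ range (i+1), g j = 0 := by
      intro i hi
      exact (Finset.sum_eq_zero_iff_of_nonpos hterms' |>.mp habel) i hi
    have := hall (k-1) (Finset.mem_range.mpr (by omega))
    have hne : a (k-1+1) - a (k-1) ≠ 0 := by
      have := ha (k-1) (k-1+1) (Nat.lt_succ_self _) (by omega)
      linarith
    have := mul_eq_zero.mp this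
    rcases this with h | h
    · exact absurd h hne
    · have : k - 1 + 1 = k := by omega
      rwa [this] at h
  intro j hj
  have h1 := hD (j+1) (by omega)
  have h2 := hD j (by omega)
  rw [Finset.sum_range_succ, h2, zero_add] at h1
  exact h1

/-- Equality case of Ruhe's trace inequality: if `tr(AB) = ∑ λ_j(A) λ_j(B)` with
eigenvalues in non-increasing order, and all eigenvalues of `A` are distinct and all
eigenvalues of `B` are distinct, then `A` and `B` commute. -/
theorem stmt_1 (d : ℕ) (A B : Matrix (Fin d) (Fin d) ℝ)
    (hA : A.IsHermitian) (hB : B.IsHermitian)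
    (μA μB : Fin d → ℝ) (hμA : Antitone μA) (hμB : Antitone μB)
    (eA : Fin d ≃ Fin d) (heA : μA = hA.eigenvalues ∘ eA)
    (eB : Fin d ≃ Fin d) (heB : μB = hB.eigenvalues ∘ eB)
    (hAdist : Function.Injective μA) (hBdist : Function.Injective μB)
    (heq : (A * B).trace = ∑ j : Fin d, μA j * μB j) :
    A * B = B * A := by
  classical
  obtain ⟨Um, hUm⟩ : ∃ M : Matrix (Fin d) (Fin d) ℝ, M = hA.eigenvectorUnitary := ⟨_, rfl⟩
  obtain ⟨Vm, hVm⟩ : ∃ M : Matrix (Fin d) (Fin d) ℝ, M = hB.eigenvectorUnitary := ⟨_, rfl⟩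
  obtain ⟨α, hα⟩ : ∃ f : Fin d → ℝ, f = hA.eigenvalues := ⟨_, rfl⟩
  obtain ⟨β, hβ⟩ : ∃ f : Fin d → ℝ, f = hB.eigenvalues := ⟨_, rfl⟩
  have hU1 : star Um * Um = 1 := by
    rw [hUm]; exact Unitary.star_mul_self_of_mem hA.eigenvectorUnitary.prop
  have hU2 : Um * star Um = 1 := by
    rw [hUm]; exact Unitary.mul_star_self_of_mem hA.eigenvectorUnitary.prop
  have hV1 : star Vm * Vm = 1 := by
    rw [hVm]; exact Unitary.star_mul_self_of_mem hB.eigenvectorUnitary.prop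
  have hV2 : Vm * star Vm = 1 := by
    rw [hVm]; exact Unitary.mul_star_self_of_mem hB.eigenvectorUnitary.prop
  have hAspec : A = Um * diagonal α * star Um := by
    rw [hUm, hα]; simpa using hA.spectral_theorem
  have hBspec : B = Vm * diagonal β * star Vm := by
    rw [hVm, hβ]; simpa using hB.spectral_theorem
  obtain ⟨C, hCdef⟩ : ∃ M : Matrix (Fin d) (Fin d) ℝ, M = star Um * B * Um := ⟨_, rfl⟩
  obtain ⟨W, hWdef⟩ : ∃ M : Matrix (Fin d) (Fin d) ℝ, M = star Um * Vm := ⟨_, rfl⟩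
  have hstarW : star W = star Vm * Um := by rw [hWdef, Matrix.star_mul, star_star]
  have hCW : C = W * diagonal β * star W := by
    rw [hCdef, hstarW, hWdef, hBspec]; simp only [Matrix.mul_assoc]
  have hW1 : star W * W = 1 := by
    rw [hstarW, hWdef]
    calc star Vm * Um * (star Um * Vm) = star Vm * (Um * star Um) * Vm := by
          simp only [Matrix.mul_assoc]
      _ = 1 := by rw [hU2, Matrix.mul_one, hV1]
  have hW2 : W * star W = 1 := by
    rw [hstarW, hWdef]
    calc star Um * Vm * (star Vm * Um) = star Um * (Vm * star Vm) * Um := by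
          simp only [Matrix.mul_assoc]
      _ = 1 := by rw [hV2, Matrix.mul_one, hU1]
  -- entries of C
  have hCapp : ∀ i i', C i i' = ∑ q, β q * (W i q * W i' q) := by
    intro i i'
    rw [hCW, Matrix.mul_apply]
    simp only [Matrix.mul_diagonal, Matrix.star_apply, star_trivial]
    exact Finset.sum_congr rfl fun q _ => by ring
  have hWrow : ∀ i i', (∑ q, W i q * W i' q) = if i = i' then 1 else 0 := by
    intro i i'
    have h := congrFun (congrFun hW2 i) i'
    simpa [Matrix.mul_apply, Matrix.star_apply, Matrix.one_apply] using h
  have hWcol : ∀ q q', (∑ i, W i q * W i q') = if q = q' then 1 else 0 := by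
    intro q q'
    have h := congrFun (congrFun hW1 q) q'
    simpa [Matrix.mul_apply, Matrix.star_apply, Matrix.one_apply, mul_comm] using h
  have hCsymm : ∀ i i', C i' i = C i i' := by
    intro i i'
    rw [hCapp, hCapp]
    exact Finset.sum_congr rfl fun q _ => by ring
  -- trace computations
  have hconjU : ∀ X : Matrix (Fin d) (Fin d) ℝ, (star Um * X * Um).trace = X.trace := by
    intro X
    rw [Matrix.trace_mul_comm, ← Matrix.mul_assoc, hU2, one_mul]
  have htrAB : (A * B).trace = ∑ i, α i * C i i := by
    rw [hAspec]
    have h1 : Um * diagonal α * star Um * B = Um * (diagonal α * (star Um * B)) := by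
      simp only [Matrix.mul_assoc]
    rw [h1, Matrix.trace_mul_comm]
    have h2 : diagonal α * (star Um * B) * Um = diagonal α * C := by
      rw [hCdef]; simp only [Matrix.mul_assoc]
    rw [h2]
    simp [Matrix.trace, Matrix.diag, Matrix.diagonal_mul]
  have htrC : C.trace = ∑ q, β q := by
    rw [hCdef, hconjU, hBspec, Matrix.trace_mul_comm, ← Matrix.mul_assoc, hV1, one_mul,
      Matrix.trace_diagonal]
  have hCC : C * C = star Um * (B * B) * Um := by
    rw [hCdef]
    simp only [Matrix.mul_assoc]
    rw [← Matrix.mul_assoc Um (star Um), hU2, one_mul]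
  have hBB : B * B = Vm * diagonal (fun q => β q * β q) * star Vm := by
    rw [hBspec]
    simp only [Matrix.mul_assoc]
    rw [← Matrix.mul_assoc (star Vm) Vm, hV1, one_mul, ← Matrix.diagonal_mul_diagonal]
    simp only [Matrix.mul_assoc]
  have htrCC : (C * C).trace = ∑ q, β q * β q := by
    rw [hCC, hconjU, hBB, Matrix.trace_mul_comm, ← Matrix.mul_assoc, hV1, one_mul,
      Matrix.trace_diagonal]
  -- reindexed diagonal entries
  obtain ⟨b, hbdef⟩ : ∃ f : Fin d → ℝ, f = fun j => C (eA j) (eA j) := ⟨_, rfl⟩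
  have hbC : ∀ j, b j = C (eA j) (eA j) := fun j => by rw [hbdef]
  have hμBβ : ∀ q, μB q = β (eB q) := fun q => by rw [heB, hβ]; rfl
  have hμAα : ∀ j, μA j = α (eA j) := fun j => by rw [heA, hα]; rfl
  have hbval : ∀ j, b j = ∑ q, μB q * (W (eA j) (eB q))^2 := by
    intro j
    rw [hbC, hCapp]
    rw [← Equiv.sum_comp eB (fun p => β p * (W (eA j) p * W (eA j) p))]
    refine Finset.sum_congr rfl fun q _ => ?_
    rw [hμBβ, sq]
  have hrow1 : ∀ j : Fin d, ∑ q, (W (eA j) (eB q))^2 = 1 := by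
    intro j
    rw [Equiv.sum_comp eB (fun p => (W (eA j) p)^2)]
    simpa [sq] using hWrow (eA j) (eA j)
  have hcol1 : ∀ q : Fin d, ∑ j, (W (eA j) (eB q))^2 = 1 := by
    intro q
    rw [Equiv.sum_comp eA (fun i => (W i (eB q))^2)]
    simpa [sq] using hWcol (eB q) (eB q)
  -- ℕ-indexed versions
  obtain ⟨μA', hμA'def⟩ : ∃ f : ℕ → ℝ, f = fun n => if h : n < d then μA ⟨n, h⟩ else 0 := ⟨_, rfl⟩
  obtain ⟨μB', hμB'def⟩ : ∃ f : ℕ → ℝ, f = fun n => if h : n < d then μB ⟨n, h⟩ else 0 := ⟨_, rfl⟩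
  obtain ⟨b', hb'def⟩ : ∃ f : ℕ → ℝ, f = fun n => if h : n < d then b ⟨n, h⟩ else 0 := ⟨_, rfl⟩
  obtain ⟨Mn, hMndef⟩ : ∃ f : ℕ → ℕ → ℝ,
      f = fun n m => if h : n < d ∧ m < d then (W (eA ⟨n, h.1⟩) (eB ⟨m, h.2⟩))^2 else 0 := ⟨_, rfl⟩
  have hμA'lt : ∀ (n) (h : n < d), μA' n = μA ⟨n, h⟩ := by
    intro n h; rw [hμA'def]; simp [h]
  have hμB'lt : ∀ (n) (h : n < d), μB' n = μB ⟨n, h⟩ := by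
    intro n h; rw [hμB'def]; simp [h]
  have hb'lt : ∀ (n) (h : n < d), b' n = b ⟨n, h⟩ := by
    intro n h; rw [hb'def]; simp [h]
  have hMnlt : ∀ (n m) (hn : n < d) (hm : m < d),
      Mn n m = (W (eA ⟨n, hn⟩) (eB ⟨m, hm⟩))^2 := by
    intro n m hn hm; rw [hMndef]; simp [hn, hm]
  have hMn0 : ∀ n m, 0 ≤ Mn n m := by
    intro n m; rw [hMndef]; dsimp only; split
    · exact sq_nonneg _
    · exact le_rfl
  have key : ∀ (F : ℕ → ℝ) (f : Fin d → ℝ), (∀ j : Fin d, F j = f j) →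
      ∑ n ∈ range d, F n = ∑ j : Fin d, f j := by
    intro F f h
    rw [← Fin.sum_univ_eq_sum_range F d]
    exact Finset.sum_congr rfl fun j _ => h j
  -- partial sum inequalities (Ky Fan)
  have hpartial : ∀ k, k ≤ d → ∑ n ∈ range k, b' n ≤ ∑ n ∈ range k, μB' n := by
    intro k hk
    have hb'eq : ∀ n, n < d → b' n = ∑ m ∈ range d, μB' m * Mn n m := by
      intro n hn
      rw [hb'lt n hn, hbval]
      refine (key (fun m => μB' m * Mn n m) (fun q => μB q * (W (eA ⟨n, hn⟩) (eB q))^2) ?_).symm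
      intro q
      rw [hμB'lt _ q.isLt, hMnlt _ _ hn q.isLt]
      try simp
    have hstep : ∑ n ∈ range k, b' n = ∑ m ∈ range d, μB' m * (∑ n ∈ range k, Mn n m) := by
      rw [Finset.sum_congr rfl (fun n hn => hb'eq n (lt_of_lt_of_le (Finset.mem_range.mp hn) hk)),
        Finset.sum_comm]
      exact Finset.sum_congr rfl fun m _ => by rw [Finset.mul_sum]
    rw [hstep]
    refine aux_kyfan d k hk μB' (fun m => ∑ n ∈ range k, Mn n m) ?_ ?_ ?_ ?_
    · intro p q hpq hq
      rw [hμB'lt q hq, hμB'lt p (lt_of_le_of_lt hpq hq)]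
      exact hμB (Fin.mk_le_mk.mpr hpq)
    · intro m; exact Finset.sum_nonneg fun n _ => hMn0 n m
    · intro m
      by_cases hm : m < d
      · calc ∑ n ∈ range k, Mn n m ≤ ∑ n ∈ range d, Mn n m :=
              Finset.sum_le_sum_of_subset_of_nonneg (Finset.range_subset_range.mpr hk)
                (fun n _ _ => hMn0 n m)
          _ = 1 := by
              rw [key (fun n => Mn n m) (fun j => (W (eA j) (eB ⟨m, hm⟩))^2)
                (fun j => by (try dsimp only); rw [hMnlt _ _ j.isLt hm]; try simp)]
              exact hcol1 ⟨m, hm⟩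
      · have hz : ∀ n ∈ range k, Mn n m = 0 := by
          intro n _; rw [hMndef]; dsimp only; rw [dif_neg]; tauto
        rw [Finset.sum_eq_zero hz]; norm_num
    · rw [Finset.sum_comm]
      have h1 : ∀ n ∈ range k, ∑ m ∈ range d, Mn n m = 1 := by
        intro n hn
        have hnd : n < d := lt_of_lt_of_le (Finset.mem_range.mp hn) hk
        rw [key (fun m => Mn n m) (fun q => (W (eA ⟨n, hnd⟩) (eB q))^2)
          (fun q => by (try dsimp only); rw [hMnlt _ _ hnd q.isLt]; try simp)]
        exact hrow1 ⟨n, hnd⟩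
      rw [Finset.sum_congr rfl h1]
      simp
  -- total sums agree
  have hkb : ∑ n ∈ range d, b' n = ∑ j : Fin d, b j :=
    key b' b (fun j => by rw [hb'lt _ j.isLt]; try simp)
  have hkμB : ∑ n ∈ range d, μB' n = ∑ j : Fin d, μB j :=
    key μB' μB (fun j => by rw [hμB'lt _ j.isLt]; try simp)
  have htotal : ∑ n ∈ range d, b' n = ∑ n ∈ range d, μB' n := by
    rw [hkb, hkμB]
    have h2 : ∑ j : Fin d, b j = C.trace := by
      rw [hbdef]
      rw [Equiv.sum_comp eA (fun i => C i i)]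
      simp [Matrix.trace, Matrix.diag]
    have h4 : ∑ j : Fin d, μB j = ∑ q : Fin d, β q := by
      rw [← Equiv.sum_comp eB β]
      exact Finset.sum_congr rfl fun q _ => hμBβ q
    rw [h2, h4, htrC]
  -- weighted sums agree
  have hweight : ∑ n ∈ range d, μA' n * b' n = ∑ n ∈ range d, μA' n * μB' n := by
    have h1 : ∑ n ∈ range d, μA' n * b' n = ∑ j : Fin d, μA j * b j :=
      key _ _ (fun j => by (try dsimp only); rw [hμA'lt _ j.isLt, hb'lt _ j.isLt]; try simp)
    have h2 : ∑ j : Fin d, μA j * b j = ∑ i, α i * C i i := by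
      rw [← Equiv.sum_comp eA (fun i => α i * C i i)]
      exact Finset.sum_congr rfl fun j _ => by rw [hμAα, hbC]
    have h4 : ∑ n ∈ range d, μA' n * μB' n = ∑ j : Fin d, μA j * μB j :=
      key _ _ (fun j => by (try dsimp only); rw [hμA'lt _ j.isLt, hμB'lt _ j.isLt]; try simp)
    rw [h1, h2, ← htrAB, heq, h4]
  -- force equality of b and μB
  have hsA : StrictAnti μA := hμA.strictAnti_of_injective hAdist
  have hforce := aux_force d μA' (fun n => μB' n - b' n)
    (by intro p q hpq hq
        rw [hμA'lt q hq, hμA'lt p (hpq.trans hq)]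
        exact hsA (Fin.mk_lt_mk.mpr hpq))
    (by intro k hk
        rw [Finset.sum_sub_distrib]
        have := hpartial k hk; linarith)
    (by rw [Finset.sum_sub_distrib, htotal, sub_self])
    (by have hx : ∀ n ∈ range d, μA' n * (μB' n - b' n) = μA' n * μB' n - μA' n * b' n :=
          fun n _ => by ring
        rw [Finset.sum_congr rfl hx, Finset.sum_sub_distrib, hweight, sub_self])
  have hbj : ∀ j : Fin d, b j = μB j := by
    intro j
    have h := hforce j j.isLt
    rw [hμB'lt _ j.isLt, hb'lt _ j.isLt] at h
    simp only [Fin.eta] at h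
    linarith
  -- Frobenius norm argument: C is diagonal
  have hsqdiag : ∑ i, (C i i)^2 = ∑ q, β q * β q := by
    rw [← Equiv.sum_comp eA (fun i => (C i i)^2), ← Equiv.sum_comp eB (fun q => β q * β q)]
    refine Finset.sum_congr rfl fun j _ => ?_
    rw [← hbC, hbj j, hμBβ, sq]
  have hsqfull : ∑ i, ∑ i', (C i i')^2 = ∑ q, β q * β q := by
    rw [← htrCC]
    simp only [Matrix.trace, Matrix.diag, Matrix.mul_apply]
    refine Finset.sum_congr rfl fun i _ => Finset.sum_congr rfl fun i' _ => ?_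
    rw [hCsymm i i', sq]
  have hoffzero : ∀ i i', i ≠ i' → C i i' = 0 := by
    have hkey : ∑ i, ∑ i' ∈ Finset.univ.erase i, (C i i')^2 = 0 := by
      have expand : ∀ i : Fin d, ∑ i', (C i i')^2
          = (C i i)^2 + ∑ i' ∈ Finset.univ.erase i, (C i i')^2 :=
        fun i => (Finset.add_sum_erase Finset.univ _ (Finset.mem_univ i)).symm
      have hs : ∑ i, ∑ i', (C i i')^2
          = ∑ i, (C i i)^2 + ∑ i, ∑ i' ∈ Finset.univ.erase i, (C i i')^2 := by
        rw [← Finset.sum_add_distrib]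
        exact Finset.sum_congr rfl fun i _ => expand i
      rw [hsqfull, hsqdiag] at hs
      linarith
    intro i i' hne
    have h1 := (Finset.sum_eq_zero_iff_of_nonneg
      (fun i _ => Finset.sum_nonneg fun i' _ => sq_nonneg _)).mp hkey i (Finset.mem_univ i)
    have h2 := (Finset.sum_eq_zero_iff_of_nonneg (fun i' _ => sq_nonneg _)).mp h1 i'
      (Finset.mem_erase.mpr ⟨hne.symm, Finset.mem_univ _⟩)
    exact sq_eq_zero_iff.mp h2
  have hCd : C = diagonal (fun i => C i i) := by
    ext i i'
    by_cases h : i = i'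
    · subst h; simp
    · rw [Matrix.diagonal_apply_ne _ h]; exact hoffzero i i' h
  -- conclude
  have hBC : B = Um * C * star Um := by
    rw [hCdef]
    rw [show Um * (star Um * B * Um) * star Um = (Um * star Um) * B * (Um * star Um) from by
      simp only [Matrix.mul_assoc], hU2, one_mul, Matrix.mul_one]
  have hmulUXU : ∀ X Y : Matrix (Fin d) (Fin d) ℝ,
      (Um * X * star Um) * (Um * Y * star Um) = Um * (X * Y) * star Um := by
    intro X Y
    rw [show (Um * X * star Um) * (Um * Y * star Um)
        = Um * (X * ((star Um * Um) * (Y * star Um))) from by simp only [Matrix.mul_assoc],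
      hU1, one_mul]
    simp only [Matrix.mul_assoc]
  have hcommD : diagonal α * C = C * diagonal α := by
    rw [hCd, Matrix.diagonal_mul_diagonal, Matrix.diagonal_mul_diagonal]
    exact congrArg diagonal (funext fun i => mul_comm (α i) (C i i))
  calc A * B = Um * (diagonal α * C) * star Um := by rw [hAspec, hBC, hmulUXU]
    _ = Um * (C * diagonal α) * star Um := by rw [hcommD]
    _ = B * A := by rw [hAspec, hBC, hmulUXU]
end
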